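/- For any non-decreasing Boolean function f : {0,1}^n → {0,1}, P(f = 1) ≤ 2·exp(−(1/(2n))·((1−p)·E(|P(f)| | f=1))²). -/

import Mathlib

open Finset Real

/-- The Bernoulli(p) product weight of a configuration `ω ∈ {0,1}^n`. -/
def W (n : ℕ) (p : ℝ) (ω : Fin n → Bool) : ℝ :=
  ∏ i, if ω i then p else 1 - p

/-- Expectation of `g` under the Bernoulli(p) product measure on `{0,1}^n`. -/
def Ex (n : ℕ) (p : ℝ) (g : (Fin n → Bool) → ℝ) : ℝ :=
  ∑ ω : Fin n → Bool, g ω * W n p ω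

/-- `ω` with its `i`-th coordinate set to `1`. -/
def up1 {n : ℕ} (ω : Fin n → Bool) (i : Fin n) : Fin n → Bool :=
  Function.update ω i true

/-- `ω` with its `i`-th coordinate set to `0`. -/
def up0 {n : ℕ} (ω : Fin n → Bool) (i : Fin n) : Fin n → Bool :=
  Function.update ω i false

/-- The random variable `X i (ω) = ω(i)/p − (1−ω(i))/(1−p)`. -/
noncomputable def X (n : ℕ) (p : ℝ) (i : Fin n) (ω : Fin n → Bool) : ℝ :=
  (if ω i then (1:ℝ) else 0) / p - (1 - if ω i then (1:ℝ) else 0) / (1 - p)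

/-- `S_n = X_1 + ⋯ + X_n`. -/
noncomputable def Sn (n : ℕ) (p : ℝ) (ω : Fin n → Bool) : ℝ :=
  ∑ i, X n p i ω

/-- The set of pivotal coordinates of `f` at `ω`. -/
def pivSet {n : ℕ} (f : (Fin n → Bool) → Bool) (ω : Fin n → Bool) : Finset (Fin n) :=
  Finset.univ.filter fun i => f (up1 ω i) ≠ f (up0 ω i)

/-- The real value of a Boolean function. -/
def fval {n : ℕ} (f : (Fin n → Bool) → Bool) (ω : Fin n → Bool) : ℝ :=
  if f ω then 1 else 0

/-- Probability of an event under the Bernoulli(p) product measure. -/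
def Pr (n : ℕ) (p : ℝ) (A : (Fin n → Bool) → Prop) [DecidablePred A] : ℝ :=
  ∑ ω ∈ Finset.univ.filter A, W n p ω

/-- `f` is non-decreasing. -/
def Mono {n : ℕ} (f : (Fin n → Bool) → Bool) : Prop :=
  ∀ (ω : Fin n → Bool) (i : Fin n), f (up0 ω i) ≤ f (up1 ω i)

/-!
For monotone `f`, a coordinate `i` that is pivotal at `ω` forces `f ω = ω i`. Pairing each
configuration with its flip at `i` therefore gives `E[(ω_i - p) f] = (1 - p) E[1{i pivotal} f]`,
so the centred number of ones `N - np` has mean `c = (1 - p) E(|P(f)| | f = 1)` under the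
conditional law given `f = 1`. Jensen's inequality for that law and the sub-Gaussian bound
`E e^{λ(N - np)} ≤ e^{nλ²/2}` give `P(f = 1) e^{λc} ≤ E[e^{λ(N - np)}; f = 1] ≤ e^{nλ²/2}`,
and `λ = c/n` yields `P(f = 1) ≤ e^{-c²/(2n)}`.
-/

variable {n : ℕ} {p : ℝ}

def centeredCount (p : ℝ) (ω : Fin n → Bool) : ℝ :=
  ∑ i, ((if ω i then 1 else 0) - p)

lemma W_nonneg (hp0 : 0 ≤ p) (hp1 : p ≤ 1) (ω : Fin n → Bool) : 0 ≤ W n p ω :=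
  prod_nonneg fun i _ => by split <;> linarith

lemma W_update (ω : Fin n → Bool) (i : Fin n) (b : Bool) :
    W n p (Function.update ω i b) =
      (if b then p else 1 - p) * ∏ j ∈ univ.erase i, (if ω j then p else 1 - p) := by
  rw [W, ← mul_prod_erase univ _ (mem_univ i)]
  congr 1
  · simp
  · exact prod_congr rfl fun j hj => by rw [Function.update_of_ne (ne_of_mem_erase hj)]

lemma Ex_mono (hp0 : 0 ≤ p) (hp1 : p ≤ 1) {g h : (Fin n → Bool) → ℝ} (hgh : g ≤ h) :
    Ex n p g ≤ Ex n p h :=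
  sum_le_sum fun ω _ => mul_le_mul_of_nonneg_right (hgh ω) (W_nonneg hp0 hp1 ω)

lemma Ex_const_mul (c : ℝ) (g : (Fin n → Bool) → ℝ) :
    Ex n p (fun ω => c * g ω) = c * Ex n p g := by
  simp only [Ex, mul_sum, mul_assoc]

lemma Ex_sum {ι : Type*} (s : Finset ι) (g : ι → (Fin n → Bool) → ℝ) :
    Ex n p (fun ω => ∑ i ∈ s, g i ω) = ∑ i ∈ s, Ex n p (g i) := by
  simp only [Ex, sum_mul]
  exact sum_comm

lemma Ex_prod (g : Fin n → Bool → ℝ) :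
    Ex n p (fun ω => ∏ i, g i (ω i)) = ∏ i, (p * g i true + (1 - p) * g i false) := by
  simp only [Ex, W, ← prod_mul_distrib]
  rw [← Fintype.prod_sum (fun i b => g i b * if b then p else 1 - p)]
  exact prod_congr rfl fun i _ => by rw [Fintype.sum_bool]; simp [mul_comm]

lemma Pr_eq_Ex_fval (f : (Fin n → Bool) → Bool) :
    Pr n p (fun ω => f ω = true) = Ex n p (fval f) := by
  rw [Pr, sum_filter]
  exact sum_congr rfl fun ω _ => by by_cases h : f ω <;> simp [fval, h]

lemma fval_nonneg (f : (Fin n → Bool) → Bool) : 0 ≤ fval f := fun ω => by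
  unfold fval; split <;> norm_num

lemma fval_le_one (f : (Fin n → Bool) → Bool) (ω : Fin n → Bool) : fval f ω ≤ 1 := by
  unfold fval; split <;> norm_num

-- Jensen's inequality for `exp` under the law with density `g / E g`, under which `y` has mean `t`.
lemma Ex_mul_exp_le (hp0 : 0 ≤ p) (hp1 : p ≤ 1) {g y : (Fin n → Bool) → ℝ} (hg : 0 ≤ g)
    {t : ℝ} (ht : Ex n p (fun ω => y ω * g ω) = t * Ex n p g) :
    Ex n p g * exp t ≤ Ex n p (fun ω => exp (y ω) * g ω) := by
  have hlin : Ex n p (fun ω => exp t * (1 + (y ω - t)) * g ω) = exp t * Ex n p g := by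
    simp only [Ex, mul_add, add_mul, mul_sub, sub_mul, sum_add_distrib, sum_sub_distrib] at ht ⊢
    simp only [mul_one, mul_assoc, ← mul_sum] at ht ⊢
    rw [ht]
    ring
  rw [mul_comm, ← hlin]
  refine Ex_mono hp0 hp1 fun ω => mul_le_mul_of_nonneg_right ?_ (hg ω)
  calc exp t * (1 + (y ω - t)) ≤ exp t * exp (y ω - t) :=
        mul_le_mul_of_nonneg_left (by linarith [add_one_le_exp (y ω - t)]) (exp_nonneg t)
    _ = exp (y ω) := by rw [← exp_add, add_sub_cancel]

section Pivotal

variable {f : (Fin n → Bool) → Bool}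

lemma sum_eq_zero_of_up1_add_up0 {M : Type*} [AddCommMonoid M] (i : Fin n)
    {g : (Fin n → Bool) → M} (h : ∀ ω, g (up1 ω i) + g (up0 ω i) = 0) : ∑ ω, g ω = 0 := by
  refine sum_ninvolution (fun ω => Function.update ω i (!ω i)) (fun ω => ?_)
    (fun ω _ hω => by simpa using congrFun hω i) (fun _ => mem_univ _)
    (fun ω => by simp)
  have hpair := h ω
  cases hωi : ω i
  · rw [show up0 ω i = ω by rw [up0, ← hωi, Function.update_eq_self], add_comm] at hpair
    rwa [Bool.not_false]
  · rwa [show up1 ω i = ω by rw [up1, ← hωi, Function.update_eq_self]] at hpair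

lemma mem_pivSet_update (ω : Fin n → Bool) (i : Fin n) (b : Bool) :
    i ∈ pivSet f (Function.update ω i b) ↔ i ∈ pivSet f ω := by
  rw [pivSet, pivSet, mem_filter, mem_filter]
  simp only [up1, up0, Function.update_idem]

lemma Mono.apply_up_of_mem_pivSet (hf : Mono f) {ω : Fin n → Bool} {i : Fin n}
    (h : i ∈ pivSet f ω) : f (up1 ω i) = true ∧ f (up0 ω i) = false := by
  have hle := hf ω i
  simp only [pivSet, mem_filter, mem_univ, true_and] at h
  revert h hle
  cases f (up1 ω i) <;> cases f (up0 ω i) <;> simp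

lemma Ex_coord_sub_mul_fval (hf : Mono f) (i : Fin n) :
    Ex n p (fun ω => ((if ω i then 1 else 0) - p) * fval f ω) =
      (1 - p) * Ex n p (fun ω => (if i ∈ pivSet f ω then 1 else 0) * fval f ω) := by
  rw [← sub_eq_zero, ← Ex_const_mul, Ex, Ex, ← sum_sub_distrib]
  refine sum_eq_zero_of_up1_add_up0 i fun ω => ?_
  by_cases h : i ∈ pivSet f ω
  · obtain ⟨h1, h0⟩ := hf.apply_up_of_mem_pivSet h
    simp only [up1, up0] at h1 h0
    simp [up1, up0, fval, W_update, mem_pivSet_update, h, h1, h0]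
  · have heq : f (up1 ω i) = f (up0 ω i) := by simpa [pivSet] using h
    simp only [up1, up0] at heq
    cases hb : f (Function.update ω i false)
    · simp [up1, up0, fval, heq, hb]
    · simp [up1, up0, fval, W_update, mem_pivSet_update, h, heq, hb]
      ring

lemma Ex_centeredCount_mul_fval (hf : Mono f) :
    Ex n p (fun ω => centeredCount p ω * fval f ω) =
      (1 - p) * Ex n p (fun ω => (pivSet f ω).card * fval f ω) := by
  have hcard (ω : Fin n → Bool) :
      ((pivSet f ω).card : ℝ) = ∑ i, if i ∈ pivSet f ω then 1 else 0 := by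
    simp
  simp only [centeredCount, hcard, sum_mul, Ex_sum, Ex_coord_sub_mul_fval hf, mul_sum]

end Pivotal

-- The two exponentials lie below chords of `exp` over `[-l, l]`, whose weights add up to `cosh l`.
lemma bernoulli_mgf_le (hp0 : 0 ≤ p) (hp1 : p ≤ 1) (l : ℝ) :
    p * exp (l * (1 - p)) + (1 - p) * exp (l * (0 - p)) ≤ exp (l ^ 2 / 2) := by
  have chord (a : ℝ) (ha0 : 0 ≤ a) (ha1 : a ≤ 1) :
      exp (l * (1 - 2 * a)) ≤ a * exp (-l) + (1 - a) * exp l := by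
    have hconv := convexOn_exp.2 (Set.mem_univ (-l)) (Set.mem_univ l) ha0 (sub_nonneg.2 ha1)
      (add_sub_cancel a 1)
    rwa [smul_eq_mul, smul_eq_mul, smul_eq_mul, smul_eq_mul,
      show a * -l + (1 - a) * l = l * (1 - 2 * a) by ring] at hconv
  have h1 := chord (p / 2) (by linarith) (by linarith)
  have h0 := chord ((1 + p) / 2) (by linarith) (by linarith)
  rw [show 1 - 2 * (p / 2) = 1 - p by ring] at h1
  rw [show 1 - 2 * ((1 + p) / 2) = 0 - p by ring] at h0
  have hcosh := cosh_le_exp_half_sq l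
  rw [cosh_eq] at hcosh
  nlinarith [mul_le_mul_of_nonneg_left h1 hp0, mul_le_mul_of_nonneg_left h0 (sub_nonneg.2 hp1)]

lemma Ex_exp_centeredCount_le (hp0 : 0 ≤ p) (hp1 : p ≤ 1) (l : ℝ) :
    Ex n p (fun ω => exp (l * centeredCount p ω)) ≤ exp (n * (l ^ 2 / 2)) := by
  simp only [centeredCount, mul_sum, exp_sum]
  refine (Ex_prod fun _ b => exp (l * ((if b then 1 else 0) - p))).trans_le ?_
  calc _ ≤ ∏ _i : Fin n, exp (l ^ 2 / 2) :=
        prod_le_prod (fun _ _ => add_nonneg (mul_nonneg hp0 (exp_nonneg _))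
            (mul_nonneg (sub_nonneg.2 hp1) (exp_nonneg _)))
          fun _ _ => by simpa using bernoulli_mgf_le hp0 hp1 l
    _ = exp (n * (l ^ 2 / 2)) := by rw [prod_const, card_univ, Fintype.card_fin, ← exp_nat_mul]

lemma Pr_le_exp_of_Ex_centeredCount_mul_fval (hn : 0 < n) (hp0 : 0 ≤ p) (hp1 : p ≤ 1)
    {f : (Fin n → Bool) → Bool} {c : ℝ}
    (hc : Ex n p (fun ω => centeredCount p ω * fval f ω) = c * Pr n p (fun ω => f ω = true)) :
    Pr n p (fun ω => f ω = true) ≤ exp (-(1 / (2 * n)) * c ^ 2) := by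
  rw [Pr_eq_Ex_fval] at hc ⊢
  set l := c / n with hl
  have hjensen : Ex n p (fval f) * exp (l * c) ≤
      Ex n p (fun ω => exp (l * centeredCount p ω) * fval f ω) := by
    refine Ex_mul_exp_le hp0 hp1 (fval_nonneg f) ?_
    simp only [mul_assoc, Ex_const_mul, hc]
  have hdrop : Ex n p (fun ω => exp (l * centeredCount p ω) * fval f ω) ≤
      Ex n p (fun ω => exp (l * centeredCount p ω)) :=
    Ex_mono hp0 hp1 fun ω => mul_le_of_le_one_right (exp_nonneg _) (fval_le_one f ω)
  have hexponent : n * (l ^ 2 / 2) - l * c = -(1 / (2 * n)) * c ^ 2 := by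
    rw [hl]
    field_simp
    ring
  calc Ex n p (fval f) = Ex n p (fval f) * exp (l * c) * exp (-(l * c)) := by
        rw [mul_assoc, ← exp_add, add_neg_cancel, exp_zero, mul_one]
    _ ≤ exp (n * (l ^ 2 / 2)) * exp (-(l * c)) := by
        gcongr
        exact hjensen.trans (hdrop.trans (Ex_exp_centeredCount_le hp0 hp1 l))
    _ = exp (-(1 / (2 * n)) * c ^ 2) := by rw [← exp_add, ← hexponent, sub_eq_add_neg]

theorem stmt17 (n : ℕ) (hn : 1 ≤ n) (p : ℝ) (hp0 : 0 < p) (hp1 : p < 1)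
    (f : (Fin n → Bool) → Bool) (hf : Mono f)
    (hpos : 0 < Pr n p (fun ω => f ω = true)) :
    Pr n p (fun ω => f ω = true) ≤
      2 * Real.exp (-(1 / (2 * n)) *
        ((1 - p) *
          (Ex n p (fun ω => ((pivSet f ω).card : ℝ) * fval f ω) /
            Pr n p (fun ω => f ω = true))) ^ 2) := by
  have hmean : Ex n p (fun ω => centeredCount p ω * fval f ω) =
      (1 - p) * (Ex n p (fun ω => ((pivSet f ω).card : ℝ) * fval f ω) /
        Pr n p (fun ω => f ω = true)) * Pr n p (fun ω => f ω = true) := by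
    rw [Ex_centeredCount_mul_fval hf, mul_assoc, div_mul_cancel₀ _ hpos.ne']
  exact (Pr_le_exp_of_Ex_centeredCount_mul_fval hn hp0.le hp1.le hmean).trans
    (le_mul_of_one_le_left (exp_nonneg _) one_le_two)
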